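/- For the principal part equation D_x⁴D_y²u = Z₄₂(x,y) with continuous right-hand side, the function u(x,y) = Σ_{i=0}^{3}Σ_{j=0}^{1} (x−h₁)^i(y−h₂)^j/(i!j!)·Z_{i,j} + Σ_{j=0}^{1} (y−h₂)^j/j! ∫_{h₁}^{x}(x−μ)³/6·Z_{4,j}(μ)dμ + Σ_{i=0}^{3} (x−h₁)^i/i! ∫_{h₂}^{y}(y−τ)·Z_{i,2}(τ)dτ + ∫_{h₁}^{x}∫_{h₂}^{y} (x−μ)³(y−τ)/6 · Z₄₂(μ,τ)dτdμ satisfies both D_x⁴D_y²u = Z₄₂ and all the non-classical conditions (4). -/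

import Mathlib

/-!
The formula for `u` is a Taylor polynomial plus Cauchy's repeated-integral remainder, taken once
in `y` and once in `x`. For continuous `g`, `f x = ∑_{i ≤ n} (x - a)^i / i! * c i +
∫_a^x (x - t)^n / n! * g t` satisfies `f^(k) a = c k` for `k ≤ n` and `f^(n+1) = g`, because
differentiation lowers `n` by one. After Fubini on the double integral, `u x` is such a function
of `y` (with `n = 1`) whose initial data and right-hand side are in turn such functions of `x`
(with `n = 3`), so the one-variable fact applied twice gives every condition.
-/

open intervalIntegral

/-- Mixed partial derivative `D_x^i D_y^j u`. -/
noncomputable def Dmix (i j : ℕ) (u : ℝ → ℝ → ℝ) : ℝ → ℝ → ℝ :=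
  fun x y => iteratedDeriv i (fun s => iteratedDeriv j (u s) y) x

open Finset
open scoped Nat

/-- Cauchy's formula for the `(n + 1)`-fold iterated integral of `g` from `a`. -/
noncomputable def cauchyRepeatedIntegral (a : ℝ) (g : ℝ → ℝ) (n : ℕ) (x : ℝ) : ℝ :=
  ∫ t in a..x, (x - t) ^ n / n ! * g t

noncomputable def cauchyProblemSolution (a : ℝ) (c : ℕ → ℝ) (g : ℝ → ℝ) (n : ℕ) (x : ℝ) : ℝ :=
  ∑ i ∈ range (n + 1), (x - a) ^ i / i ! * c i + cauchyRepeatedIntegral a g n x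

section OneVariable

variable {g : ℝ → ℝ} (a : ℝ)

theorem integral_sub_pow_succ_mul (hg : Continuous g) (n : ℕ) (x : ℝ) :
    ∫ t in a..x, (x - t) ^ (n + 1) * g t =
      x * (∫ t in a..x, (x - t) ^ n * g t) - ∫ t in a..x, (x - t) ^ n * (t * g t) := by
  rw [← integral_const_mul, ← integral_sub (by apply Continuous.intervalIntegrable; fun_prop)
    (by apply Continuous.intervalIntegrable; fun_prop)]
  congr 1 with t
  ring

/-- By `integral_sub_pow_succ_mul`, the derivative for `n + 1` reduces to the one for `n`,
applied to both `g` and `t ↦ t * g t`. -/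
theorem hasDerivAt_integral_sub_pow_succ_mul (hg : Continuous g) (n : ℕ) (x : ℝ) :
    HasDerivAt (fun x => ∫ t in a..x, (x - t) ^ (n + 1) * g t)
      ((n + 1) * ∫ t in a..x, (x - t) ^ n * g t) x := by
  induction n generalizing g x with
  | zero =>
    have hFTC {f : ℝ → ℝ} (hf : Continuous f) : HasDerivAt (fun x => ∫ t in a..x, f t) (f x) x :=
      (hf.integral_hasStrictDerivAt a x).hasDerivAt
    simp_rw [integral_sub_pow_succ_mul a hg, pow_zero, one_mul]
    refine ((hasDerivAt_id x).mul (hFTC hg) |>.sub (hFTC (continuous_id.mul hg))).congr_deriv ?_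
    simp
  | succ n ih =>
    simp_rw [integral_sub_pow_succ_mul a hg (n + 1)]
    refine ((hasDerivAt_id x).mul (ih hg x) |>.sub (ih (continuous_id.mul hg) x)).congr_deriv ?_
    rw [integral_sub_pow_succ_mul a hg n]
    simp only [id_eq, Pi.mul_apply, Nat.cast_add, Nat.cast_one]
    ring

theorem cauchyRepeatedIntegral_eq_div (n : ℕ) (x : ℝ) :
    cauchyRepeatedIntegral a g n x = (∫ t in a..x, (x - t) ^ n * g t) / n ! := by
  rw [cauchyRepeatedIntegral, ← integral_div]
  congr 1 with t
  ring

theorem hasDerivAt_cauchyRepeatedIntegral_succ (hg : Continuous g) (n : ℕ) (x : ℝ) :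
    HasDerivAt (cauchyRepeatedIntegral a g (n + 1)) (cauchyRepeatedIntegral a g n x) x := by
  have hfun : cauchyRepeatedIntegral a g (n + 1) =
      fun x => (∫ t in a..x, (x - t) ^ (n + 1) * g t) / (n + 1)! :=
    funext (cauchyRepeatedIntegral_eq_div a (n + 1))
  rw [hfun, cauchyRepeatedIntegral_eq_div]
  refine ((hasDerivAt_integral_sub_pow_succ_mul a hg n x).div_const ((n + 1)! : ℝ)).congr_deriv ?_
  rw [Nat.factorial_succ, Nat.cast_mul]
  field_simp
  push_cast
  ring

theorem hasDerivAt_cauchyRepeatedIntegral_zero (hg : Continuous g) (x : ℝ) :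
    HasDerivAt (cauchyRepeatedIntegral a g 0) (g x) x := by
  have hfun : cauchyRepeatedIntegral a g 0 = fun x => ∫ t in a..x, g t := by
    ext x; simp [cauchyRepeatedIntegral]
  rw [hfun]
  exact (hg.integral_hasStrictDerivAt a x).hasDerivAt

theorem hasDerivAt_sub_pow_succ_div_factorial (i : ℕ) (x : ℝ) :
    HasDerivAt (fun x => (x - a) ^ (i + 1) / (i + 1)!) ((x - a) ^ i / i !) x := by
  refine (((hasDerivAt_id x).sub_const a |>.pow (i + 1)).div_const ((i + 1)! : ℝ)).congr_deriv ?_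
  rw [Nat.factorial_succ, Nat.cast_mul]
  field_simp
  simp

theorem hasDerivAt_cauchyProblemSolution_succ (hg : Continuous g) (c : ℕ → ℝ) (n : ℕ) (x : ℝ) :
    HasDerivAt (cauchyProblemSolution a c g (n + 1))
      (cauchyProblemSolution a (fun i => c (i + 1)) g n x) x := by
  have hfun : cauchyProblemSolution a c g (n + 1) = fun x =>
      ∑ i ∈ range (n + 1), (x - a) ^ (i + 1) / (i + 1)! * c (i + 1) + c 0
        + cauchyRepeatedIntegral a g (n + 1) x := by
    ext x; simp [cauchyProblemSolution, sum_range_succ' _ (n + 1)]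
  rw [hfun]
  refine ((HasDerivAt.fun_sum fun i _ => ?_).add_const _).add
    (hasDerivAt_cauchyRepeatedIntegral_succ a hg n x)
  exact (hasDerivAt_sub_pow_succ_div_factorial a i x).mul_const _

theorem iteratedDeriv_cauchyProblemSolution (hg : Continuous g) (c : ℕ → ℝ) (n k : ℕ) :
    iteratedDeriv k (cauchyProblemSolution a c g (n + k)) =
      cauchyProblemSolution a (fun i => c (i + k)) g n := by
  induction k generalizing c n with
  | zero => rfl
  | succ k ih =>
    have hderiv : deriv (cauchyProblemSolution a c g (n + k + 1)) =
        cauchyProblemSolution a (fun i => c (i + 1)) g (n + k) :=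
      funext fun x => (hasDerivAt_cauchyProblemSolution_succ a hg c (n + k) x).deriv
    rw [← add_assoc, iteratedDeriv_succ', hderiv, ih]
    simp only [add_assoc]

theorem cauchyProblemSolution_self (c : ℕ → ℝ) (n : ℕ) :
    cauchyProblemSolution a c g n a = c 0 := by
  simp [cauchyProblemSolution, cauchyRepeatedIntegral, sum_range_succ']

theorem iteratedDeriv_cauchyProblemSolution_self (hg : Continuous g) (c : ℕ → ℝ) {k n : ℕ}
    (hk : k ≤ n) : iteratedDeriv k (cauchyProblemSolution a c g n) a = c k := by
  obtain ⟨m, rfl⟩ := Nat.exists_eq_add_of_le' hk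
  rw [iteratedDeriv_cauchyProblemSolution a hg, cauchyProblemSolution_self, zero_add]

theorem iteratedDeriv_succ_cauchyProblemSolution (hg : Continuous g) (c : ℕ → ℝ) (n : ℕ) :
    iteratedDeriv (n + 1) (cauchyProblemSolution a c g n) = g := by
  have h := iteratedDeriv_cauchyProblemSolution a hg c 0 n
  rw [zero_add] at h
  rw [iteratedDeriv_succ, h]
  have hfun : cauchyProblemSolution a (fun i => c (i + n)) g 0 =
      fun x => c n + cauchyRepeatedIntegral a g 0 x := by
    ext x; simp [cauchyProblemSolution]
  ext x
  rw [hfun]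
  exact ((hasDerivAt_cauchyRepeatedIntegral_zero a hg x).const_add _).deriv

end OneVariable

theorem continuous_cauchyProblemSolution_param {X : Type*} [TopologicalSpace X]
    {c : ℕ → X → ℝ} {G : X → ℝ → ℝ} {n : ℕ} (hc : ∀ i ≤ n, Continuous (c i))
    (hG : Continuous fun q : X × ℝ => G q.1 q.2) (a x : ℝ) :
    Continuous fun p => cauchyProblemSolution a (fun i => c i p) (G p) n x := by
  refine (continuous_finsetSum _ fun i hi => continuous_const.mul
    (hc i (Nat.lt_succ_iff.1 (mem_range.1 hi)))).add ?_
  exact continuous_parametric_intervalIntegral_of_continuous' (by fun_prop) a x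

theorem cauchyProblemSolution_nested_eq (a b : ℝ) (m n : ℕ) (Z : ℕ → ℕ → ℝ)
    (Z4 Z2 : ℕ → ℝ → ℝ) (Z42 : ℝ → ℝ → ℝ) (hZ2 : ∀ i ≤ m, Continuous (Z2 i))
    (hZ42 : Continuous fun p : ℝ × ℝ => Z42 p.1 p.2) (x y : ℝ) :
    cauchyProblemSolution b (fun j => cauchyProblemSolution a (fun i => Z i j) (Z4 j) m x)
        (fun τ => cauchyProblemSolution a (fun i => Z2 i τ) (fun μ => Z42 μ τ) m x) n y =
      (∑ i ∈ range (m + 1), ∑ j ∈ range (n + 1),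
          (x - a) ^ i * (y - b) ^ j / (i ! * j !) * Z i j)
      + (∑ j ∈ range (n + 1), (y - b) ^ j / j ! * cauchyRepeatedIntegral a (Z4 j) m x)
      + (∑ i ∈ range (m + 1), (x - a) ^ i / i ! * cauchyRepeatedIntegral b (Z2 i) n y)
      + ∫ μ in a..x, ∫ τ in b..y, (x - μ) ^ m * (y - τ) ^ n / (m ! * n !) * Z42 μ τ := by
  have hZ42' : Continuous fun p : ℝ × ℝ => Z42 p.2 p.1 := hZ42.comp continuous_swap
  have hpoly : ∀ i ∈ range (m + 1), Continuous fun τ => (x - a) ^ i / i ! * Z2 i τ :=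
    fun i hi => continuous_const.mul (hZ2 i (Nat.lt_succ_iff.1 (mem_range.1 hi)))
  have hrem : Continuous fun τ => cauchyRepeatedIntegral a (fun μ => Z42 μ τ) m x :=
    continuous_parametric_intervalIntegral_of_continuous' (by fun_prop) a x
  have hkernel : Continuous fun τ => (y - τ) ^ n / n ! := by fun_prop
  have hlin : cauchyRepeatedIntegral b
      (fun τ => cauchyProblemSolution a (fun i => Z2 i τ) (fun μ => Z42 μ τ) m x) n y =
      ∑ i ∈ range (m + 1), (x - a) ^ i / i ! * cauchyRepeatedIntegral b (Z2 i) n y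
        + cauchyRepeatedIntegral b (fun τ => cauchyRepeatedIntegral a (fun μ => Z42 μ τ) m x)
          n y := by
    simp only [cauchyRepeatedIntegral, cauchyProblemSolution, mul_add, mul_sum]
    rw [integral_add, integral_finsetSum]
    · refine congrArg₂ (· + ·) (sum_congr rfl fun i _ => ?_) rfl
      rw [← integral_const_mul]
      refine integral_congr fun τ _ => ?_
      ring
    · exact fun i hi => (hkernel.mul (hpoly i hi)).intervalIntegrable _ _
    · exact (continuous_finsetSum _ fun i hi => hkernel.mul (hpoly i hi)).intervalIntegrable _ _
    · exact (hkernel.mul hrem).intervalIntegrable _ _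
  have hswap : cauchyRepeatedIntegral b
      (fun τ => cauchyRepeatedIntegral a (fun μ => Z42 μ τ) m x) n y =
      ∫ μ in a..x, ∫ τ in b..y, (x - μ) ^ m * (y - τ) ^ n / (m ! * n !) * Z42 μ τ := by
    simp only [cauchyRepeatedIntegral, ← integral_const_mul]
    rw [MeasureTheory.intervalIntegral_intervalIntegral_swap]
    · refine integral_congr fun μ _ => integral_congr fun τ _ => ?_
      ring
    · exact ((by fun_prop : Continuous _).continuousOn.integrableOn_compact
        (isCompact_uIcc.prod isCompact_uIcc)).mono_set
        (Set.prod_mono Set.uIoc_subset_uIcc Set.uIoc_subset_uIcc)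
  rw [cauchyProblemSolution, hlin, hswap]
  simp only [cauchyProblemSolution, mul_add, sum_add_distrib, mul_sum]
  rw [sum_comm, ← add_assoc]
  congr 3
  exact sum_congr rfl fun i _ => sum_congr rfl fun j _ => by ring

/-- The explicit function built from the non-classical data solves the principal-part
equation `D_x⁴D_y²u = Z₄₂` and satisfies all the non-classical conditions (4). -/
theorem stmt17 (h₁ h₂ : ℝ) (Z : ℕ → ℕ → ℝ) (Z4 Z2 : ℕ → ℝ → ℝ) (Z42 : ℝ → ℝ → ℝ)
    (hZ4 : ∀ j ≤ 1, Continuous (Z4 j)) (hZ2 : ∀ i ≤ 3, Continuous (Z2 i))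
    (hZ42 : Continuous (fun p : ℝ × ℝ => Z42 p.1 p.2))
    (u : ℝ → ℝ → ℝ)
    (hu : ∀ x y, u x y =
      (∑ i ∈ Finset.range 4, ∑ j ∈ Finset.range 2,
        (x - h₁) ^ i * (y - h₂) ^ j / ((Nat.factorial i : ℝ) * (Nat.factorial j : ℝ)) * Z i j)
      + (∑ j ∈ Finset.range 2,
        (y - h₂) ^ j / (Nat.factorial j : ℝ) * ∫ μ in h₁..x, (x - μ) ^ 3 / 6 * Z4 j μ)
      + (∑ i ∈ Finset.range 4,
        (x - h₁) ^ i / (Nat.factorial i : ℝ) * ∫ τ in h₂..y, (y - τ) * Z2 i τ)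
      + ∫ μ in h₁..x, ∫ τ in h₂..y, (x - μ) ^ 3 * (y - τ) / 6 * Z42 μ τ) :
    (∀ x y, Dmix 4 2 u x y = Z42 x y) ∧
    (∀ i ≤ 3, ∀ j ≤ 1, Dmix i j u h₁ h₂ = Z i j) ∧
    (∀ j ≤ 1, ∀ x, Dmix 4 j u x h₂ = Z4 j x) ∧
    (∀ i ≤ 3, ∀ y, Dmix i 2 u h₁ y = Z2 i y) := by
  set A : ℕ → ℝ → ℝ := fun j => cauchyProblemSolution h₁ (fun i => Z i j) (Z4 j) 3
  set B : ℝ → ℝ → ℝ := fun x τ =>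
    cauchyProblemSolution h₁ (fun i => Z2 i τ) (fun μ => Z42 μ τ) 3 x
  have hB : ∀ x, Continuous (B x) := fun x =>
    continuous_cauchyProblemSolution_param (G := fun τ μ => Z42 μ τ) hZ2
      (hZ42.comp continuous_swap) h₁ x
  have hu_nested : ∀ x, u x = cauchyProblemSolution h₂ (fun j => A j x) (B x) 1 := by
    intro x; ext y
    rw [hu, cauchyProblemSolution_nested_eq h₁ h₂ 3 1 Z Z4 Z2 Z42 hZ2 hZ42]
    norm_num [cauchyRepeatedIntegral, Nat.factorial]
  have hDy : ∀ j ≤ 1, (fun s => iteratedDeriv j (u s) h₂) = A j := fun j hj =>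
    funext fun s => by rw [hu_nested, iteratedDeriv_cauchyProblemSolution_self h₂ (hB s) _ hj]
  have hDyy : ∀ y, (fun s => iteratedDeriv 2 (u s) y) = fun s => B s y := fun y =>
    funext fun s => by rw [hu_nested, iteratedDeriv_succ_cauchyProblemSolution h₂ (hB s)]
  have hZ42y : ∀ y, Continuous fun μ => Z42 μ y := fun y => by fun_prop
  refine ⟨fun x y => ?_, fun i hi j hj => ?_, fun j hj x => ?_, fun i hi y => ?_⟩
  · rw [Dmix, hDyy, iteratedDeriv_succ_cauchyProblemSolution h₁ (hZ42y y)]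
  · rw [Dmix, hDy j hj, iteratedDeriv_cauchyProblemSolution_self h₁ (hZ4 j hj) _ hi]
  · rw [Dmix, hDy j hj, iteratedDeriv_succ_cauchyProblemSolution h₁ (hZ4 j hj)]
  · rw [Dmix, hDyy, iteratedDeriv_cauchyProblemSolution_self h₁ (hZ42y y) _ hi]
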